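/- Let C and R be real symmetric positive definite k×k matrices with λ_max the largest eigenvalue of C and α_min the smallest eigenvalue of R, let b > 0 be such that n² := log(1/(b√((2π)ᵏ det R))) > 0, and set m = n·√(α_min/λ_max). If Y is an ℝᵏ-valued Gaussian random vector with mean 0 and covariance C, then the probability that the likelihood (1/√((2π)ᵏ det R))·exp(−YᵀR⁻¹Y) exceeds b is at least the probability that Y lies in the m-σ ellipsoid {y : yᵀC⁻¹y < m²} of C, i.e. P((1/√((2π)ᵏ det R))·exp(−YᵀR⁻¹Y) > b) ≥ P(YᵀC⁻¹Y < m²). -/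
import Mathlib


open Matrix MeasureTheory ProbabilityTheory

/-- Density of the multivariate normal distribution `N(μ, Σ)` on `ℝᵏ`
(with covariance matrix `S`). -/
noncomputable def gaussianPdf {k : ℕ} (μ : Fin k → ℝ) (S : Matrix (Fin k) (Fin k) ℝ)
    (x : Fin k → ℝ) : ℝ :=
  (Real.sqrt ((2 * Real.pi) ^ k * S.det))⁻¹ *
    Real.exp (-(1 / 2) * ((x - μ) ⬝ᵥ S⁻¹ *ᵥ (x - μ)))

/-- The multivariate normal distribution `N(μ, Σ)` on `ℝᵏ`, as the measure with
density `gaussianPdf μ S` with respect to Lebesgue measure. -/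
noncomputable def gaussianMeasure {k : ℕ} (μ : Fin k → ℝ) (S : Matrix (Fin k) (Fin k) ℝ) :
    Measure (Fin k → ℝ) :=
  volume.withDensity fun x => ENNReal.ofReal (gaussianPdf μ S x)

lemma key_quad {k : ℕ} (U : Matrix (Fin k) (Fin k) ℝ)
    (d : Fin k → ℝ) (x : Fin k → ℝ) :
    x ⬝ᵥ (U * Matrix.diagonal d * star U) *ᵥ x = ∑ i, d i * ((star U *ᵥ x) i)^2 := by
  rw [← mulVec_mulVec, ← mulVec_mulVec, dotProduct_mulVec, ← mulVec_transpose]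
  have hstar : (star U : Matrix (Fin k) (Fin k) ℝ) = Uᵀ := by
    rw [Matrix.star_eq_conjTranspose, conjTranspose]; simp [Matrix.map]; rfl
  rw [hstar]
  simp [dotProduct, mulVec_diagonal]
  ring_nf
  exact Finset.sum_congr rfl (fun i _ => by ring)

lemma spectral_real {k : ℕ} {A : Matrix (Fin k) (Fin k) ℝ} (hA : A.IsHermitian) :
    A = (hA.eigenvectorUnitary : Matrix (Fin k) (Fin k) ℝ) * Matrix.diagonal hA.eigenvalues *
      star (hA.eigenvectorUnitary : Matrix (Fin k) (Fin k) ℝ) := by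
  have := hA.spectral_theorem
  simpa using this

lemma inv_of_spectral {k : ℕ} {A U : Matrix (Fin k) (Fin k) ℝ} {d : Fin k → ℝ}
    (hA : A = U * Matrix.diagonal d * star U)
    (hU : star U * U = 1) (hU2 : U * star U = 1) (hd : ∀ i, d i ≠ 0) :
    A⁻¹ = U * Matrix.diagonal (fun i => (d i)⁻¹) * star U := by
  apply Matrix.inv_eq_left_inv
  rw [hA]
  have hDD : Matrix.diagonal (fun i => (d i)⁻¹) * Matrix.diagonal d = 1 := by
    rw [Matrix.diagonal_mul_diagonal]
    have : (fun i => (d i)⁻¹ * d i) = fun _ => (1:ℝ) := by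
      funext i; exact inv_mul_cancel₀ (hd i)
    rw [this, Matrix.diagonal_one]
  calc U * Matrix.diagonal (fun i => (d i)⁻¹) * star U * (U * Matrix.diagonal d * star U)
      = U * Matrix.diagonal (fun i => (d i)⁻¹) * (star U * U) * Matrix.diagonal d * star U := by
        noncomm_ring
    _ = 1 := by rw [hU, mul_one, mul_assoc U, hDD, mul_one, hU2]

lemma dot_self_eq_sum {k : ℕ} {A : Matrix (Fin k) (Fin k) ℝ} (hA : A.IsHermitian) (x : Fin k → ℝ) :
    x ⬝ᵥ x = ∑ i, ((star (hA.eigenvectorUnitary : Matrix (Fin k) (Fin k) ℝ) *ᵥ x) i)^2 := by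
  have h1 : (hA.eigenvectorUnitary : Matrix (Fin k) (Fin k) ℝ) * Matrix.diagonal (fun _ => (1:ℝ))
      * star (hA.eigenvectorUnitary : Matrix (Fin k) (Fin k) ℝ) = 1 := by
    rw [Matrix.diagonal_one, mul_one]; exact Unitary.coe_mul_star_self _
  have := key_quad (hA.eigenvectorUnitary : Matrix (Fin k) (Fin k) ℝ) (fun _ => (1:ℝ)) x
  rw [h1] at this
  simpa using this

lemma quad_inv_eq {k : ℕ} {A : Matrix (Fin k) (Fin k) ℝ} (hA : A.PosDef) (x : Fin k → ℝ) :
    x ⬝ᵥ A⁻¹ *ᵥ x = ∑ i, (hA.1.eigenvalues i)⁻¹ *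
      ((star (hA.1.eigenvectorUnitary : Matrix (Fin k) (Fin k) ℝ) *ᵥ x) i)^2 := by
  rw [inv_of_spectral (spectral_real hA.1) (Unitary.coe_star_mul_self _)
    (Unitary.coe_mul_star_self _) (fun i => (hA.eigenvalues_pos i).ne'), key_quad]

lemma quad_inv_le {k : ℕ} {A : Matrix (Fin k) (Fin k) ℝ} (hA : A.PosDef) {a : ℝ} (ha : 0 < a)
    (hle : ∀ i, a ≤ hA.1.eigenvalues i) (x : Fin k → ℝ) :
    x ⬝ᵥ A⁻¹ *ᵥ x ≤ a⁻¹ * (x ⬝ᵥ x) := by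
  rw [quad_inv_eq hA, dot_self_eq_sum hA.1, Finset.mul_sum]
  refine Finset.sum_le_sum fun i _ => ?_
  have := inv_anti₀ ha (hle i)
  exact mul_le_mul_of_nonneg_right this (sq_nonneg _)

lemma le_quad_inv {k : ℕ} {A : Matrix (Fin k) (Fin k) ℝ} (hA : A.PosDef) {l : ℝ}
    (hle : ∀ i, hA.1.eigenvalues i ≤ l) (x : Fin k → ℝ) :
    l⁻¹ * (x ⬝ᵥ x) ≤ x ⬝ᵥ A⁻¹ *ᵥ x := by
  rw [quad_inv_eq hA, dot_self_eq_sum hA.1, Finset.mul_sum]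
  refine Finset.sum_le_sum fun i _ => ?_
  have := inv_anti₀ (hA.eigenvalues_pos i) (hle i)
  exact mul_le_mul_of_nonneg_right this (sq_nonneg _)


/-- **Lower bound on the probability of retaining a likelihood above `b` (Proposition 1, core).**
Let `C, R` be real symmetric positive definite, `lmax` the largest eigenvalue of `C`,
`amin` the smallest eigenvalue of `R`, `b > 0` with `n² = log (1/(b √((2π)ᵏ det R))) > 0`,
and `m = n √(amin/lmax)`.  If `Y ~ N(0, C)`, then
`P ((1/√((2π)ᵏ det R)) exp (−Yᵀ R⁻¹ Y) > b) ≥ P (Yᵀ C⁻¹ Y < m²)`. -/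
theorem prob_likelihood_gt_ge_prob_m_sigma {k : ℕ}
    (C R : Matrix (Fin k) (Fin k) ℝ) (hC : C.PosDef) (hR : R.PosDef)
    (lmax amin : ℝ)
    (hlmax : IsGreatest (Set.range hC.1.eigenvalues) lmax)
    (hamin : IsLeast (Set.range hR.1.eigenvalues) amin)
    (b : ℝ) (hb : 0 < b) (n : ℝ) (hnpos : 0 < n)
    (hn : n ^ 2 = Real.log (1 / (b * Real.sqrt ((2 * Real.pi) ^ k * R.det))))
    (m : ℝ) (hm : m = n * Real.sqrt (amin / lmax))
    {Ω : Type*} [MeasureSpace Ω] [IsProbabilityMeasure (ℙ : Measure Ω)]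
    (Y : Ω → Fin k → ℝ) (hYm : Measurable Y)
    (hY : Measure.map Y ℙ = gaussianMeasure 0 C) :
    ℙ {ω | (Real.sqrt ((2 * Real.pi) ^ k * R.det))⁻¹ *
            Real.exp (-(Y ω ⬝ᵥ R⁻¹ *ᵥ Y ω)) > b} ≥
      ℙ {ω | Y ω ⬝ᵥ C⁻¹ *ᵥ Y ω < m ^ 2} := by
  set s0 : ℝ := Real.sqrt ((2 * Real.pi) ^ k * R.det) with hs0def
  have hdet : (0:ℝ) < (2 * Real.pi) ^ k * R.det :=
    mul_pos (pow_pos (by positivity) k) hR.det_pos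
  have hs0 : 0 < s0 := Real.sqrt_pos.mpr hdet
  obtain ⟨il, hil⟩ := hlmax.1
  obtain ⟨ia, hia⟩ := hamin.1
  have hlpos : 0 < lmax := hil ▸ hC.eigenvalues_pos il
  have hapos : 0 < amin := hia ▸ hR.eigenvalues_pos ia
  have hm2 : m ^ 2 = n ^ 2 * (amin / lmax) := by
    rw [hm, mul_pow, Real.sq_sqrt (by positivity)]
  have hlog : Real.log (b * s0) = - n ^ 2 := by
    rw [hn, one_div, Real.log_inv, neg_neg]
  apply measure_mono
  intro ω hω
  simp only [Set.mem_setOf_eq] at hω ⊢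
  set x := Y ω
  have hCq : lmax⁻¹ * (x ⬝ᵥ x) ≤ x ⬝ᵥ C⁻¹ *ᵥ x :=
    le_quad_inv hC (fun i => hlmax.2 ⟨i, rfl⟩) x
  have hRq : x ⬝ᵥ R⁻¹ *ᵥ x ≤ amin⁻¹ * (x ⬝ᵥ x) :=
    quad_inv_le hR hapos (fun i => hamin.2 ⟨i, rfl⟩) x
  have hq : x ⬝ᵥ R⁻¹ *ᵥ x < n ^ 2 := by
    have h1 : x ⬝ᵥ x ≤ lmax * (x ⬝ᵥ C⁻¹ *ᵥ x) :=
      (inv_mul_le_iff₀ hlpos).mp hCq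
    have h2 : x ⬝ᵥ C⁻¹ *ᵥ x < n ^ 2 * (amin / lmax) := hm2 ▸ hω
    calc x ⬝ᵥ R⁻¹ *ᵥ x ≤ amin⁻¹ * (x ⬝ᵥ x) := hRq
      _ ≤ amin⁻¹ * (lmax * (x ⬝ᵥ C⁻¹ *ᵥ x)) :=
          mul_le_mul_of_nonneg_left h1 (by positivity)
      _ < amin⁻¹ * (lmax * (n ^ 2 * (amin / lmax))) :=
          mul_lt_mul_of_pos_left (mul_lt_mul_of_pos_left h2 hlpos) (by positivity)
      _ = n ^ 2 := by field_simp
  have : b * s0 < Real.exp (-(x ⬝ᵥ R⁻¹ *ᵥ x)) := by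
    calc b * s0 = Real.exp (Real.log (b * s0)) := (Real.exp_log (by positivity)).symm
      _ = Real.exp (- n ^ 2) := by rw [hlog]
      _ < Real.exp (-(x ⬝ᵥ R⁻¹ *ᵥ x)) := Real.exp_lt_exp.mpr (by linarith)
  rw [gt_iff_lt, inv_mul_eq_div, lt_div_iff₀ hs0]
  linarith
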